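/- Let n ≥ 1, let P be the Z₂-crown of order n, and let f : P → Q₁ be a Z₂-map. Then f̂(soi(P)) = soi(Q₁) in ZMod2^{Q₁²}. -/

import Mathlib

/-! ### The poset `Q₁` (face poset of the 1-dimensional cross-polytope) -/

/-- The four elements `+0, -0, +1, -1` of `Q₁`. -/
inductive Q1 : Type
  | p0 | m0 | p1 | m1
deriving DecidableEq

instance instFintypeQ1 : Fintype Q1 :=
  ⟨{Q1.p0, Q1.m0, Q1.p1, Q1.m1}, by intro x; cases x <;> simp⟩

/-- The level (`false` for `±0`, `true` for `±1`) of an element of `Q₁`. -/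
def Q1.lvl : Q1 → Bool
  | .p0 => false | .m0 => false | .p1 => true | .m1 => true

/-- The order on `Q₁`: `±0 < ±1` (all four strict relations). -/
instance : PartialOrder Q1 where
  le x y := x = y ∨ (x.lvl = false ∧ y.lvl = true)
  le_refl x := Or.inl rfl
  le_trans x y z hxy hyz := by
    rcases hxy with rfl | ⟨h1, h2⟩
    · exact hyz
    rcases hyz with rfl | ⟨h3, h4⟩
    · exact Or.inr ⟨h1, h2⟩
    · rw [h2] at h3; exact absurd h3 (by simp)
  le_antisymm x y hxy hyx := by
    rcases hxy with rfl | ⟨h1, h2⟩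
    · rfl
    rcases hyx with rfl | ⟨h3, h4⟩
    · rfl
    · rw [h2] at h3; exact absurd h3 (by simp)

/-- The involution of `Q₁`, swapping `+x` and `-x`. -/
def q1inv : Q1 → Q1
  | .p0 => .m0 | .m0 => .p0 | .p1 => .m1 | .m1 => .p1

/-! ### The `Z₂`-crown of order `n` -/

/-- The `Z₂`-crown of order `n` has element set `ZMod (4n)`. -/
abbrev Crown (n : ℕ) : Type := ZMod (4 * n)

instance (n : ℕ) [NeZero n] : NeZero (4 * n) := ⟨by have := NeZero.ne n; omega⟩

private lemma crown_parity {n : ℕ} [NeZero n] (x : ZMod (4 * n)) :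
    (x + 1).val % 2 = (x.val + 1) % 2 := by
  haveI : Fact (1 < 4 * n) := ⟨by have := NeZero.ne n; omega⟩
  rw [ZMod.val_add, ZMod.val_one, Nat.mod_mod_of_dvd _ ⟨2 * n, by ring⟩]

/-- The order on the crown, generated by `e < e + 1` and `e < e - 1` for even `e`. -/
instance crownPO (n : ℕ) [NeZero n] : PartialOrder (Crown n) where
  le x y := x = y ∨ (Even x.val ∧ (y = x + 1 ∨ y = x - 1))
  le_refl x := Or.inl rfl
  le_trans x y z hxy hyz := by
    rcases hxy with rfl | ⟨hex, hy⟩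
    · exact hyz
    rcases hyz with rfl | ⟨hey, hz⟩
    · exact Or.inr ⟨hex, hy⟩
    · exfalso
      rcases hy with rfl | rfl
      · have h := crown_parity x
        rw [Nat.even_iff] at hex hey; omega
      · have e : x - 1 + 1 = x := by ring
        have h := crown_parity (x - 1)
        rw [e] at h
        rw [Nat.even_iff] at hex hey; omega
  le_antisymm x y hxy hyx := by
    rcases hxy with rfl | ⟨hex, hy⟩
    · rfl
    rcases hyx with rfl | ⟨hey, hx⟩
    · rfl
    · exfalso
      rcases hy with rfl | rfl
      · have h := crown_parity x
        rw [Nat.even_iff] at hex hey; omega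
      · have e : x - 1 + 1 = x := by ring
        have h := crown_parity (x - 1)
        rw [e] at h
        rw [Nat.even_iff] at hex hey; omega

/-! ### The vector space `ZMod2^{P²}` with its strict order indicator -/

/-- Ordered pairs `(x,y)` with `x ≤ y` of a poset: the basis of `ZMod2^{P²}`. -/
abbrev OPairs (P : Type) [PartialOrder P] : Type := {p : P × P // p.1 ≤ p.2}

/-- The `ZMod 2`-vector space with basis the ordered pairs of `P`. -/
abbrev VS (P : Type) [PartialOrder P] := OPairs P →₀ ZMod 2

open scoped Classical in
/-- The strict order indicator: the sum of the basis elements `(x,y)` with `x < y`. -/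
noncomputable def soi (P : Type) [PartialOrder P] [Finite P] : VS P :=
  letI : Fintype (OPairs P) := Fintype.ofFinite _
  ∑ p : OPairs P, if p.val.1 < p.val.2 then Finsupp.single p 1 else 0

open scoped Classical in
/-- The sum of the basis elements `(x,y)` with `x < y` and `x, y ∈ S`. -/
noncomputable def soiOn {P : Type} [PartialOrder P] [Finite P] (S : Set P) : VS P :=
  letI : Fintype (OPairs P) := Fintype.ofFinite _
  ∑ p : OPairs P,
    if p.val.1 ∈ S ∧ p.val.2 ∈ S ∧ p.val.1 < p.val.2 then Finsupp.single p 1 else 0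

/-- The linear map `f̂` induced by a monotone map, sending the basis element `(x,y)`
to `(f x, f y)`. -/
noncomputable def fhat {P Q : Type} [PartialOrder P] [PartialOrder Q] {f : P → Q}
    (hf : Monotone f) : VS P →ₗ[ZMod 2] VS Q :=
  Finsupp.lmapDomain (ZMod 2) (ZMod 2) (fun p => ⟨(f p.val.1, f p.val.2), hf p.prop⟩)

/-! Number the edges `{k, k + 1}` of the crown by `k ∈ ZMod (4n)`; the coefficient of `f̂(soi P)`
at `q` is the parity of the number of edges that `f` maps onto `q`. Every element of `Q₁` is
minimal or maximal, so an edge mapped onto a diagonal pair `(v, v)` is determined by one endpoint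
of a fixed parity, and each such endpoint lies on exactly two edges: the diagonal coefficients
vanish. For a strict pair `(a, b)`, colour `Q₁` by the indicator `c` of `{a, ν b}`; then
`c ∘ ν = c + 1`, and among strict pairs the colour changes exactly on `(a, b)` and `(ν a, ν b)`.
Since `f` commutes with the half-turn `x ↦ x + 2n`, the edges onto `(a, b)` correspond to the
edges of a half-crown onto `(a, b)` or `(ν a, ν b)`, i.e. to the colour changes of `c ∘ f` along
the path `0, 1, …, 2n`, whose number is `c (f 0) + c (ν (f 0)) = 1` mod 2. -/

theorem CharTwo.sum_range_add_succ {R : Type*} [Ring R] [CharP R 2] (g : ℕ → R) (m : ℕ) :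
    ∑ j ∈ Finset.range m, (g j + g (j + 1)) = g 0 + g m := by
  calc ∑ j ∈ Finset.range m, (g j + g (j + 1))
      = ∑ j ∈ Finset.range m, (g (j + 1) - g j) := by simp only [CharTwo.sub_eq_add, add_comm]
    _ = g 0 + g m := by rw [Finset.sum_range_sub, CharTwo.sub_eq_add, add_comm]

theorem ZMod.sum_eq_sum_range {M : Type*} [AddCommMonoid M] {m : ℕ} [NeZero m]
    (F : ZMod m → M) : ∑ k, F k = ∑ j ∈ Finset.range m, F j :=
  Finset.sum_nbij' ZMod.val Nat.cast (fun k _ => Finset.mem_range.2 (ZMod.val_lt k))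
    (fun _ _ => Finset.mem_univ _) (fun k _ => ZMod.natCast_zmod_val k)
    (fun _ hj => ZMod.val_cast_of_lt (Finset.mem_range.1 hj))
    (fun k _ => by rw [ZMod.natCast_zmod_val])

open scoped Classical in
theorem soi_apply (P : Type) [PartialOrder P] [Finite P] (q : OPairs P) :
    soi P q = if q.val.1 < q.val.2 then 1 else 0 := by
  rw [soi, Finsupp.finsetSum_apply, Finset.sum_eq_single q]
  · split_ifs <;> simp
  · intro p _ hp
    split_ifs <;> simp [hp]
  · simp

theorem fhat_single {P Q : Type} [PartialOrder P] [PartialOrder Q] {f : P → Q}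
    (hf : Monotone f) (p : OPairs P) (c : ZMod 2) :
    fhat hf (Finsupp.single p c) = Finsupp.single ⟨(f p.val.1, f p.val.2), hf p.prop⟩ c := by
  simp [fhat]

namespace Q1

instance : DecidableRel (α := Q1) (· ≤ ·) := fun x y =>
  inferInstanceAs (Decidable (x = y ∨ (x.lvl = false ∧ y.lvl = true)))

instance : DecidableRel (α := Q1) (· < ·) := fun _ _ => decidable_of_iff _ lt_iff_le_not_ge.symm

theorem isMin_or_isMax : ∀ x : Q1, IsMin x ∨ IsMax x := by
  unfold IsMin IsMax; decide

def cut (a b : Q1) (x : Q1) : ZMod 2 := if x = a ∨ x = q1inv b then 1 else 0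

theorem cut_q1inv : ∀ {a b : Q1}, a < b → ∀ x, cut a b (q1inv x) = cut a b x + 1 := by
  unfold cut; decide

theorem ite_add_ite_q1inv_eq_cut_add_cut : ∀ {a b : Q1}, a < b → ∀ {x y : Q1}, x ≤ y →
    ((if (x, y) = (a, b) then 1 else 0) + (if (q1inv x, q1inv y) = (a, b) then 1 else 0) : ZMod 2)
      = cut a b x + cut a b y := by
  unfold cut; decide

end Q1

namespace Crown

variable {n : ℕ} [NeZero n]

instance : Fact (1 < 4 * n) := ⟨by have := NeZero.ne n; omega⟩

def parity : Crown n →+* ZMod 2 := ZMod.castHom ⟨2 * n, by ring⟩ (ZMod 2)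

theorem even_val_iff_parity_eq_zero (x : Crown n) : Even x.val ↔ parity x = 0 := by
  rw [parity, ZMod.castHom_apply, ZMod.cast_eq_val, ZMod.natCast_eq_zero_iff_even]

theorem even_val_add_one (x : Crown n) : Even (x + 1).val ↔ ¬ Even x.val := by
  rw [even_val_iff_parity_eq_zero, even_val_iff_parity_eq_zero, map_add, map_one]
  generalize parity x = c
  revert c; decide

theorem even_val_sub_one (x : Crown n) : Even (x - 1).val ↔ ¬ Even x.val := by
  rw [← not_iff_not, ← even_val_add_one, sub_add_cancel, not_not]

theorem even_val_add_half (x : Crown n) : Even (x + ((2 * n : ℕ) : Crown n)).val ↔ Even x.val := by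
  rw [even_val_iff_parity_eq_zero, even_val_iff_parity_eq_zero, map_add, map_natCast,
    (ZMod.natCast_eq_zero_iff_even).2 (even_two_mul n), add_zero]

theorem lt_iff (x y : Crown n) : x < y ↔ Even x.val ∧ (y = x + 1 ∨ y = x - 1) := by
  refine ⟨fun h => h.le.resolve_left h.ne, fun h => lt_of_le_of_ne (Or.inr h) ?_⟩
  rintro rfl
  rcases h with ⟨-, h | h⟩
  · exact one_ne_zero (left_eq_add.1 h)
  · exact one_ne_zero (sub_eq_self.1 h.symm)

def lo (k : Crown n) : Crown n := if Even k.val then k else k + 1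

def hi (k : Crown n) : Crown n := if Even k.val then k + 1 else k

theorem lo_lt_hi (k : Crown n) : lo k < hi k := by
  rw [lo, hi]
  split_ifs with hk
  · exact (lt_iff _ _).2 ⟨hk, Or.inl rfl⟩
  · exact (lt_iff _ _).2 ⟨(even_val_add_one k).2 hk, Or.inr (add_sub_cancel_right k 1).symm⟩

def edge (k : Crown n) : OPairs (Crown n) := ⟨(lo k, hi k), (lo_lt_hi k).le⟩

theorem edge_injective : Function.Injective (edge (n := n)) := by
  have two_ne_zero : (2 : Crown n) ≠ 0 := fun h => by
    have := Nat.le_of_dvd two_pos ((ZMod.natCast_eq_zero_iff 2 (4 * n)).1 (by exact_mod_cast h))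
    have := NeZero.ne n
    omega
  intro k l h
  have hlo : lo k = lo l := congrArg (fun p : OPairs (Crown n) => p.val.1) h
  have hhi : hi k = hi l := congrArg (fun p : OPairs (Crown n) => p.val.2) h
  rw [lo, lo] at hlo
  rw [hi, hi] at hhi
  split_ifs at hlo hhi
  · exact hlo
  · exact absurd (by linear_combination hhi - hlo) two_ne_zero
  · exact absurd (by linear_combination hlo - hhi) two_ne_zero
  · exact hhi

theorem exists_edge_eq_iff (p : OPairs (Crown n)) : (∃ k, edge k = p) ↔ p.val.1 < p.val.2 := by
  refine ⟨fun ⟨k, hk⟩ => hk ▸ lo_lt_hi k, fun h => ?_⟩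
  obtain ⟨⟨x, y⟩, hxy⟩ := p
  obtain ⟨hx, rfl | rfl⟩ := (lt_iff x y).1 h
  · exact ⟨x, by simp [edge, lo, hi, hx]⟩
  · exact ⟨x - 1, by simp [edge, lo, hi, even_val_sub_one, hx]⟩

theorem soi_eq_sum_single_edge : soi (Crown n) = ∑ k, Finsupp.single (edge k) 1 := by
  classical
  rw [soi, ← Finset.sum_filter]
  rw [← Finset.sum_image (f := fun p => Finsupp.single p (1 : ZMod 2))
    fun k _ l _ h => edge_injective h]
  congr 1
  ext p
  simp [exists_edge_eq_iff]

theorem lo_add_one (k : Crown n) : lo (k + 1) = hi k + 1 := by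
  by_cases hk : Even k.val <;> simp [lo, hi, hk, even_val_add_one]

theorem lo_add_half (k : Crown n) :
    lo (k + ((2 * n : ℕ) : Crown n)) = lo k + ((2 * n : ℕ) : Crown n) := by
  simp only [lo, even_val_add_half]
  split_ifs <;> ring

theorem hi_add_half (k : Crown n) :
    hi (k + ((2 * n : ℕ) : Crown n)) = hi k + ((2 * n : ℕ) : Crown n) := by
  simp only [hi, even_val_add_half]
  split_ifs <;> ring

omit [NeZero n] in
theorem apply_lo_add_apply_hi {M : Type*} [AddCommMagma M] (φ : Crown n → M) (k : Crown n) :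
    φ (lo k) + φ (hi k) = φ k + φ (k + 1) := by
  by_cases hk : Even k.val <;> simp [lo, hi, hk, add_comm]

/-- Each even vertex `e` is the even endpoint of exactly the two edges `e - 1` and `e`. -/
theorem sum_lo_eq_zero {R : Type*} [Ring R] [CharP R 2] (φ : Crown n → R) :
    ∑ k, φ (lo k) = 0 := by
  refine Finset.sum_ninvolution (fun k => if Even k.val then k - 1 else k + 1) (fun k => ?_)
    (fun k _ => ?_) (fun _ => Finset.mem_univ _) (fun k => ?_)
  · by_cases hk : Even k.val <;> simp [lo, hk, even_val_add_one, even_val_sub_one,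
      CharTwo.add_self_eq_zero]
  · split_ifs <;> simp
  · by_cases hk : Even k.val <;> simp [hk, even_val_add_one, even_val_sub_one]

theorem sum_hi_eq_zero {R : Type*} [Ring R] [CharP R 2] (φ : Crown n → R) :
    ∑ k, φ (hi k) = 0 := by
  calc ∑ k, φ (hi k) = ∑ k, φ (lo (k + 1) - 1) := by simp [lo_add_one]
    _ = ∑ k, φ (lo k - 1) := Equiv.sum_comp (Equiv.addRight 1) fun k => φ (lo k - 1)
    _ = 0 := sum_lo_eq_zero fun x => φ (x - 1)

theorem sum_eq_sum_range_add_half {M : Type*} [AddCommMonoid M] (F : Crown n → M) :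
    ∑ k, F k = ∑ j ∈ Finset.range (2 * n), (F j + F (j + ((2 * n : ℕ) : Crown n))) := by
  rw [ZMod.sum_eq_sum_range, show Finset.range (4 * n) = Finset.range (2 * n + 2 * n) by ring_nf,
    Finset.sum_range_add, ← Finset.sum_add_distrib]
  simp [add_comm]

def edgeParity {Q : Type} [DecidableEq Q] (f : Crown n → Q) (q : Q × Q) : ZMod 2 :=
  ∑ k, if (f (lo k), f (hi k)) = q then 1 else 0

theorem fhat_soi_apply {Q : Type} [PartialOrder Q] [DecidableEq Q] {f : Crown n → Q}
    (hf : Monotone f) (q : OPairs Q) : fhat hf (soi (Crown n)) q = edgeParity f q.val := by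
  simp [soi_eq_sum_single_edge, fhat_single, Finsupp.finsetSum_apply, Finsupp.single_apply,
    edgeParity, edge, Subtype.ext_iff]

theorem edgeParity_diag_eq_zero {Q : Type} [PartialOrder Q] [DecidableEq Q] {f : Crown n → Q}
    (hf : Monotone f) {v : Q} (hv : IsMin v ∨ IsMax v) : edgeParity f (v, v) = 0 := by
  rcases hv with hv | hv
  · have h : ∀ k, (f (lo k), f (hi k)) = (v, v) ↔ f (hi k) = v := fun k =>
      ⟨fun h => (Prod.ext_iff.1 h).2, fun h => Prod.ext (hv.eq_of_le (h ▸ hf (lo_lt_hi k).le)) h⟩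
    simpa only [edgeParity, h] using sum_hi_eq_zero fun x => if f x = v then (1 : ZMod 2) else 0
  · have h : ∀ k, (f (lo k), f (hi k)) = (v, v) ↔ f (lo k) = v := fun k =>
      ⟨fun h => (Prod.ext_iff.1 h).1, fun h => Prod.ext h (hv.eq_of_ge (h ▸ hf (lo_lt_hi k).le))⟩
    simpa only [edgeParity, h] using sum_lo_eq_zero fun x => if f x = v then (1 : ZMod 2) else 0

theorem edgeParity_eq_one {f : Crown n → Q1} (hf : Monotone f)
    (hequiv : ∀ x : Crown n, f (x + ((2 * n : ℕ) : Crown n)) = q1inv (f x)) {a b : Q1}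
    (hab : a < b) : edgeParity f (a, b) = 1 := by
  set g : ℕ → ZMod 2 := fun j => Q1.cut a b (f j)
  have hstep : ∀ j : ℕ,
      ((if (f (lo j), f (hi j)) = (a, b) then 1 else 0) +
        (if (f (lo (j + ((2 * n : ℕ) : Crown n))), f (hi (j + ((2 * n : ℕ) : Crown n))))
          = (a, b) then 1 else 0) : ZMod 2) = g j + g (j + 1) := by
    intro j
    rw [lo_add_half, hi_add_half, hequiv, hequiv,
      Q1.ite_add_ite_q1inv_eq_cut_add_cut hab (hf (lo_lt_hi _).le),
      apply_lo_add_apply_hi (fun x => Q1.cut a b (f x))]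
    simp only [g, Nat.cast_succ]
  calc edgeParity f (a, b)
      = ∑ j ∈ Finset.range (2 * n), (g j + g (j + 1)) := by
        rw [edgeParity, sum_eq_sum_range_add_half]
        exact Finset.sum_congr rfl fun j _ => hstep j
    _ = g 0 + g (2 * n) := CharTwo.sum_range_add_succ g _
    _ = 1 := by
      have h0 := hequiv 0
      rw [zero_add] at h0
      simp only [g, Nat.cast_zero, h0, Q1.cut_q1inv hab, ← add_assoc, CharTwo.add_self_eq_zero,
        zero_add]

end Crown

/-- If `P` is the `Z₂`-crown of order `n ≥ 1` and `f : P → Q₁` is a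
`Z₂`-map, then `f̂(soi(P)) = soi(Q₁)`. -/
theorem crown_z2map_soi (n : ℕ) [NeZero n] (f : Crown n → Q1) (hmono : Monotone f)
    (hequiv : ∀ x : Crown n, f (x + ((2 * n : ℕ) : Crown n)) = q1inv (f x)) :
    fhat hmono (soi (Crown n)) = soi Q1 := by
  ext ⟨⟨a, b⟩, hab⟩
  rw [Crown.fhat_soi_apply, soi_apply]
  rcases hab.lt_or_eq with hlt | heq
  · rw [if_pos hlt]
    exact Crown.edgeParity_eq_one hmono hequiv hlt
  · obtain rfl : a = b := heq
    rw [if_neg (lt_irrefl a)]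
    exact Crown.edgeParity_diag_eq_zero hmono (Q1.isMin_or_isMax a)
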